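/- arXiv:2309.01973 — 5 statements merged into one kernel-verified Lean document; each statement's English description precedes it below -/
import Mathlib

section
/- Let z be a real-valued random variable whose distribution is symmetric about 0, and let a ∈ ℝ and b > 0. Then |E[(a+z) - (a+z)·b / max(|a+z|, b)]| ≤ 2|a| · P(z > b - |a|). -/
/-!
Write `r x = x - clip_b x`, the residual of clipping to `[-b, b]`. It is odd, `1`-Lipschitz and
vanishes on `[-b, b]`. Since `z` and `-z` have the same law,
`2 E[r(a + z)] = E[r(a + z) + r(a - z)] = E[r(a + z) - r(z - a)]`. The integrand is bounded by
`|2a|` and vanishes unless `|z| > b - |a|`, an event of probability at most `2 P(z > b - |a|)`,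
again by symmetry.
-/

open MeasureTheory Set

noncomputable def clipResidual (b x : ℝ) : ℝ := x - x * b / max |x| b

section clipResidual

variable {b : ℝ}

theorem clipResidual_eq_ite (hb : 0 < b) (x : ℝ) :
    clipResidual b x = if b ≤ x then x - b else if x ≤ -b then x + b else 0 := by
  unfold clipResidual
  split_ifs with h₁ h₂
  · rw [max_eq_left (by rw [abs_of_pos (hb.trans_le h₁)]; exact h₁), abs_of_pos (hb.trans_le h₁),
      mul_div_cancel_left₀ _ (hb.trans_le h₁).ne']
  · have hx : x < 0 := by linarith
    rw [max_eq_left (by rw [abs_of_neg hx]; linarith), abs_of_neg hx, div_neg,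
      mul_div_cancel_left₀ _ hx.ne]
    ring
  · rw [max_eq_right (abs_le.2 ⟨by linarith, by linarith⟩), mul_div_cancel_right₀ _ hb.ne',
      sub_self]

theorem clipResidual_neg (b x : ℝ) : clipResidual b (-x) = -clipResidual b x := by
  simp only [clipResidual, abs_neg]
  ring

theorem clipResidual_eq_zero (hb : 0 < b) {x : ℝ} (hx : |x| ≤ b) : clipResidual b x = 0 := by
  rw [clipResidual, max_eq_right hx, mul_div_cancel_right₀ _ hb.ne', sub_self]

theorem abs_clipResidual_sub_le (hb : 0 < b) (x y : ℝ) :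
    |clipResidual b x - clipResidual b y| ≤ |x - y| := by
  rw [clipResidual_eq_ite hb, clipResidual_eq_ite hb, abs_le]
  rcases abs_cases (x - y) with ⟨h, _⟩ | ⟨h, _⟩ <;> rw [h] <;> split_ifs <;> constructor <;>
    linarith

theorem abs_clipResidual_le (hb : 0 < b) (x : ℝ) : |clipResidual b x| ≤ |x| := by
  simpa [clipResidual_eq_zero hb (abs_zero.trans_le hb.le)] using abs_clipResidual_sub_le hb x 0

theorem continuous_clipResidual (hb : 0 < b) : Continuous (clipResidual b) :=
  continuous_id.sub <| (continuous_id.mul continuous_const).div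
    (continuous_abs.max continuous_const) fun _ => (lt_max_of_lt_right hb).ne'

theorem abs_clipResidual_add_add_clipResidual_sub_le (hb : 0 < b) (a x : ℝ) :
    |clipResidual b (a + x) + clipResidual b (a - x)|
      ≤ {x | b - |a| < |x|}.indicator (fun _ => 2 * |a|) x := by
  by_cases hx : x ∈ {x | b - |a| < |x|}
  · rw [indicator_of_mem hx]
    calc |clipResidual b (a + x) + clipResidual b (a - x)|
        = |clipResidual b (a + x) - clipResidual b (x - a)| := by
          rw [← neg_sub x a, clipResidual_neg, ← sub_eq_add_neg]
      _ ≤ |(a + x) - (x - a)| := abs_clipResidual_sub_le hb _ _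
      _ = 2 * |a| := by rw [show (a + x) - (x - a) = 2 * a by ring, abs_mul, abs_two]
  · have hax : |a| + |x| ≤ b := by linarith [not_lt.1 (show ¬b - |a| < |x| from hx)]
    rw [indicator_of_notMem hx, clipResidual_eq_zero hb ((abs_add_le a x).trans hax),
      clipResidual_eq_zero hb ((abs_sub a x).trans hax), add_zero, abs_zero]

end clipResidual

section SymmetricMeasure

variable (ν : Measure ℝ) [IsFiniteMeasure ν] [ν.IsNegInvariant]

theorem measureReal_setOf_lt_abs_le_two_mul (t : ℝ) :
    ν.real {x | t < |x|} ≤ 2 * ν.real (Ioi t) := by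
  have hsub : {x : ℝ | t < |x|} ⊆ Ioi t ∪ -Ioi t := fun x (hx : t < |x|) => by
    rcases lt_abs.1 hx with h | h
    · exact Or.inl h
    · exact Or.inr (show t < -x from h)
  calc ν.real {x | t < |x|} ≤ ν.real (Ioi t ∪ -Ioi t) := measureReal_mono hsub
    _ ≤ ν.real (Ioi t) + ν.real (-Ioi t) := measureReal_union_le _ _
    _ = 2 * ν.real (Ioi t) := by simp only [Measure.real, Measure.measure_neg, two_mul]

variable {ν}

theorem abs_integral_clipResidual_le (hν : Integrable id ν) {b : ℝ} (hb : 0 < b) (a : ℝ) :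
    |∫ x, clipResidual b (a + x) ∂ν| ≤ 2 * |a| * ν.real (Ioi (b - |a|)) := by
  have hint : Integrable (fun x => clipResidual b (a + x)) ν := by
    refine ((integrable_const |a|).add hν.abs).mono'
      ((continuous_clipResidual hb).comp (continuous_const_add a)).aestronglyMeasurable ?_
    exact .of_forall fun x => (abs_clipResidual_le hb _).trans (abs_add_le a x)
  have hsymm : ∫ x, clipResidual b (a - x) ∂ν = ∫ x, clipResidual b (a + x) ∂ν := by
    simpa only [← sub_eq_add_neg] using integral_neg_eq_self (fun x => clipResidual b (a + x)) ν
  have hS : MeasurableSet {x : ℝ | b - |a| < |x|} :=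
    measurableSet_lt measurable_const measurable_abs
  have hsum : |∫ x, clipResidual b (a + x) + clipResidual b (a - x) ∂ν|
      ≤ 2 * |a| * ν.real {x | b - |a| < |x|} := by
    calc |∫ x, clipResidual b (a + x) + clipResidual b (a - x) ∂ν|
        ≤ ∫ x, {x | b - |a| < |x|}.indicator (fun _ => 2 * |a|) x ∂ν :=
          norm_integral_le_of_norm_le
            (f := fun x => clipResidual b (a + x) + clipResidual b (a - x))
            ((integrable_const _).indicator hS)
            (.of_forall (abs_clipResidual_add_add_clipResidual_sub_le hb a))
      _ = 2 * |a| * ν.real {x | b - |a| < |x|} := by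
          rw [integral_indicator_const _ hS, smul_eq_mul, mul_comm]
  rw [integral_add hint (by simpa only [← sub_eq_add_neg] using hint.comp_neg), hsymm, ← two_mul,
    abs_mul, abs_two] at hsum
  nlinarith [measureReal_setOf_lt_abs_le_two_mul ν (b - |a|), abs_nonneg a]

end SymmetricMeasure

/-- For a real random variable `z` symmetric about 0, `a : ℝ` and `b > 0`,
`|E[(a+z) - (a+z)·b / max(|a+z|, b)]| ≤ 2|a| · P(z > b - |a|)`. -/
theorem clipped_bias_aux {Ω : Type*} [MeasurableSpace Ω] (μ : Measure Ω)
    [IsProbabilityMeasure μ] (z : Ω → ℝ) (hz : Integrable z μ) (hzm : AEMeasurable z μ)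
    (hsym : Measure.map z μ = Measure.map (fun ω => -z ω) μ)
    (a b : ℝ) (hb : 0 < b) :
    |∫ ω, ((a + z ω) - (a + z ω) * b / max |a + z ω| b) ∂μ|
      ≤ 2 * |a| * (μ {ω | b - |a| < z ω}).toReal := by
  have : (μ.map z).IsNegInvariant := ⟨by
    rw [Measure.neg_def, AEMeasurable.map_map_of_aemeasurable measurable_neg.aemeasurable hzm]
    exact hsym.symm⟩
  have hint : Integrable id (μ.map z) := (integrable_map_measure aestronglyMeasurable_id hzm).2 hz
  have hlaw : ∫ x, clipResidual b (a + x) ∂(μ.map z) = ∫ ω, clipResidual b (a + z ω) ∂μ :=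
    integral_map hzm
      ((continuous_clipResidual hb).comp (continuous_const_add a)).aestronglyMeasurable
  have htail : (μ.map z).real (Ioi (b - |a|)) = (μ {ω | b - |a| < z ω}).toReal := by
    rw [measureReal_def, Measure.map_apply_of_aemeasurable hzm measurableSet_Ioi]
    rfl
  change |∫ ω, clipResidual b (a + z ω) ∂μ| ≤ _
  rw [← hlaw, ← htail]
  exact abs_integral_clipResidual_le hint hb a
end

section
/- Let z₁ and z₂ be independent random vectors in ℝ^d with finite second moments. Then Var(z₁ · z₂) ≤ 3·Tr(Cov(z₁))·‖Cov(z₂)‖ + 3·‖E[z₁]‖²·‖Cov(z₂)‖ + 3·‖E[z₂]‖²·‖Cov(z₁)‖. -/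
open MeasureTheory ProbabilityTheory Matrix
open scoped RealInnerProductSpace

/-- The operator (spectral) norm of a real `d × d` matrix. -/
noncomputable def opNorm {d : ℕ} (M : Matrix (Fin d) (Fin d) ℝ) : ℝ :=
  ‖Matrix.toEuclideanCLM (𝕜 := ℝ) M‖

/-- The covariance matrix `Cov(z) = E[(z-E[z])(z-E[z])ᵀ]` of a random vector `z`. -/
noncomputable def covM {Ω : Type*} [MeasurableSpace Ω] (μ : Measure Ω) {d : ℕ}
    (z : Ω → EuclideanSpace ℝ (Fin d)) : Matrix (Fin d) (Fin d) ℝ :=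
  fun i j => ∫ ω, (z ω i - ∫ ω', z ω' i ∂μ) * (z ω j - ∫ ω', z ω' j ∂μ) ∂μ

/-!
Write `mᵢ = E[zᵢ]`. Then `⟪z₁, z₂⟫ = ⟪m₁, z₂⟫ + ⟪m₂, z₁⟫ + ⟪z₁ - m₁, z₂ - m₂⟫ - ⟪m₁, m₂⟫`, and
`Var(A + B + C) ≤ 3 (Var A + Var B + Var C)`. The variance of `⟪a, z⟫` is the quadratic form
`aᵀ Cov(z) a ≤ ‖Cov(z)‖ ‖a‖²`, which bounds the first two terms. For `u = z₁ - m₁`,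
`v = z₂ - m₂`, independence factorises `E[⟪u, v⟫²] = ∑ᵢⱼ E[uᵢuⱼ] E[vᵢvⱼ] = E[uᵀ Cov(z₂) u]`,
which is at most `‖Cov(z₂)‖ E‖u‖² = ‖Cov(z₂)‖ Tr Cov(z₁)`.
-/

lemma sum_mul_mul_le_opNorm_mul_norm_sq {d : ℕ} (M : Matrix (Fin d) (Fin d) ℝ)
    (x : EuclideanSpace ℝ (Fin d)) :
    ∑ i, ∑ j, x i * x j * M i j ≤ opNorm M * ‖x‖ ^ 2 := by
  have h : ∑ i, ∑ j, x i * x j * M i j = ⟪x, Matrix.toEuclideanCLM (𝕜 := ℝ) M x⟫ := by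
    simp only [Matrix.inner_toEuclideanCLM, dotProduct, mulVec, Finset.mul_sum]
    exact Finset.sum_congr rfl fun i _ => Finset.sum_congr rfl fun j _ => by ring
  calc ∑ i, ∑ j, x i * x j * M i j ≤ ‖x‖ * ‖Matrix.toEuclideanCLM (𝕜 := ℝ) M x‖ :=
        h ▸ real_inner_le_norm _ _
    _ ≤ ‖x‖ * (opNorm M * ‖x‖) := by gcongr; exact ContinuousLinearMap.le_opNorm _ _
    _ = opNorm M * ‖x‖ ^ 2 := by ring

lemma real_inner_sq_eq_sum_sum {ι : Type*} [Fintype ι] (x y : EuclideanSpace ℝ ι) :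
    ⟪x, y⟫ ^ 2 = ∑ i, ∑ j, x i * x j * (y i * y j) := by
  simp only [PiLp.inner_apply, RCLike.inner_apply, conj_trivial, sq, Finset.sum_mul_sum]
  exact Finset.sum_congr rfl fun i _ => Finset.sum_congr rfl fun j _ => by ring

section

variable {Ω : Type*} [MeasurableSpace Ω] {μ : Measure Ω}

lemma integral_sum_sum {ι κ : Type*} [Fintype ι] [Fintype κ] {f : ι → κ → Ω → ℝ}
    (hf : ∀ i j, Integrable (f i j) μ) :
    ∫ ω, ∑ i, ∑ j, f i j ω ∂μ = ∑ i, ∑ j, ∫ ω, f i j ω ∂μ := by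
  rw [integral_finsetSum _ fun i _ => integrable_finsetSum _ fun j _ => hf i j]
  exact Finset.sum_congr rfl fun i _ => integral_finsetSum _ fun j _ => hf i j

lemma variance_add_add_le [IsProbabilityMeasure μ] {X Y Z : Ω → ℝ}
    (hX : MemLp X 2 μ) (hY : MemLp Y 2 μ) (hZ : MemLp Z 2 μ) :
    Var[X + Y + Z; μ] ≤ 3 * (Var[X; μ] + Var[Y; μ] + Var[Z; μ]) := by
  have hcX : Integrable (fun ω => (X ω - μ[X]) ^ 2) μ := (hX.sub (memLp_const _)).integrable_sq
  have hcY : Integrable (fun ω => (Y ω - μ[Y]) ^ 2) μ := (hY.sub (memLp_const _)).integrable_sq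
  have hcZ : Integrable (fun ω => (Z ω - μ[Z]) ^ 2) μ := (hZ.sub (memLp_const _)).integrable_sq
  have hmean : μ[X + Y + Z] = μ[X] + μ[Y] + μ[Z] := by
    have hXi := hX.integrable one_le_two
    have hYi := hY.integrable one_le_two
    rw [integral_add' (hXi.add hYi) (hZ.integrable one_le_two), integral_add' hXi hYi]
  rw [variance_eq_integral (hX.add hY |>.add hZ).aemeasurable, hmean,
    variance_eq_integral hX.aemeasurable, variance_eq_integral hY.aemeasurable,
    variance_eq_integral hZ.aemeasurable]
  calc ∫ ω, ((X + Y + Z) ω - (μ[X] + μ[Y] + μ[Z])) ^ 2 ∂μ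
      ≤ ∫ ω, 3 * ((X ω - μ[X]) ^ 2 + (Y ω - μ[Y]) ^ 2 + (Z ω - μ[Z]) ^ 2) ∂μ := by
        refine integral_mono_of_nonneg (ae_of_all _ fun ω => sq_nonneg _)
          (((hcX.add hcY).add hcZ).const_mul 3) (ae_of_all _ fun ω => ?_)
        simp only [Pi.add_apply]
        nlinarith [sq_nonneg (X ω - μ[X] - (Y ω - μ[Y])), sq_nonneg (X ω - μ[X] - (Z ω - μ[Z])),
          sq_nonneg (Y ω - μ[Y] - (Z ω - μ[Z]))]
    _ = _ := by rw [integral_const_mul, integral_add (hcX.fun_add hcY) hcZ, integral_add hcX hcY]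

lemma covM_apply {d : ℕ} {z : Ω → EuclideanSpace ℝ (Fin d)} (hz : Integrable z μ) (i j : Fin d) :
    covM μ z i j = ∫ ω, (z ω - ∫ ω', z ω' ∂μ) i * (z ω - ∫ ω', z ω' ∂μ) j ∂μ := by
  simp only [covM, PiLp.sub_apply, eval_integral_piLp hz.eval_piLp]

lemma trace_covM [IsFiniteMeasure μ] {d : ℕ} {z : Ω → EuclideanSpace ℝ (Fin d)}
    (hz : MemLp z 2 μ) :
    (covM μ z).trace = ∫ ω, ‖z ω - ∫ ω', z ω' ∂μ‖ ^ 2 ∂μ := by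
  have hc : MemLp (fun ω => z ω - ∫ ω', z ω' ∂μ) 2 μ := hz.sub (memLp_const _)
  simp only [EuclideanSpace.real_norm_sq_eq]
  rw [integral_finsetSum _ fun i _ => (hc.eval_piLp i).integrable_sq]
  refine Finset.sum_congr rfl fun i _ => ?_
  simp only [diag_apply, covM_apply (hz.integrable one_le_two), sq]

lemma variance_inner_eq [IsFiniteMeasure μ] {d : ℕ} {z : Ω → EuclideanSpace ℝ (Fin d)}
    (hz : MemLp z 2 μ) (a : EuclideanSpace ℝ (Fin d)) :
    Var[fun ω => ⟪a, z ω⟫; μ] = ∑ i, ∑ j, a i * a j * covM μ z i j := by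
  simp only [PiLp.inner_apply, RCLike.inner_apply, conj_trivial]
  rw [variance_fun_sum fun i => (hz.eval_piLp i).mul_const (a i)]
  refine Finset.sum_congr rfl fun i _ => Finset.sum_congr rfl fun j _ => ?_
  rw [covariance_mul_const_left, covariance_mul_const_right]
  simp only [covM, covariance]
  ring

lemma variance_inner_le [IsFiniteMeasure μ] {d : ℕ} {z : Ω → EuclideanSpace ℝ (Fin d)}
    (hz : MemLp z 2 μ) (a : EuclideanSpace ℝ (Fin d)) :
    Var[fun ω => ⟪a, z ω⟫; μ] ≤ opNorm (covM μ z) * ‖a‖ ^ 2 :=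
  variance_inner_eq hz a ▸ sum_mul_mul_le_opNorm_mul_norm_sq _ _

lemma sum_sum_integral_mul_le_opNorm_mul {d : ℕ} {U : Ω → EuclideanSpace ℝ (Fin d)}
    (hU : MemLp U 2 μ) (M : Matrix (Fin d) (Fin d) ℝ) :
    ∑ i, ∑ j, (∫ ω, U ω i * U ω j ∂μ) * M i j ≤ opNorm M * ∫ ω, ‖U ω‖ ^ 2 ∂μ := by
  have hUU (i j : Fin d) : Integrable (fun ω => U ω i * U ω j * M i j) μ :=
    ((hU.eval_piLp i).integrable_mul (hU.eval_piLp j)).mul_const _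
  calc ∑ i, ∑ j, (∫ ω, U ω i * U ω j ∂μ) * M i j
      = ∫ ω, ∑ i, ∑ j, U ω i * U ω j * M i j ∂μ := by
        simp only [integral_sum_sum hUU, integral_mul_const]
    _ ≤ ∫ ω, opNorm M * ‖U ω‖ ^ 2 ∂μ :=
        integral_mono (integrable_finsetSum _ fun i _ => integrable_finsetSum _ fun j _ => hUU i j)
          (hU.integrable_norm_pow two_ne_zero |>.const_mul _)
          fun ω => sum_mul_mul_le_opNorm_mul_norm_sq M (U ω)
    _ = opNorm M * ∫ ω, ‖U ω‖ ^ 2 ∂μ := integral_const_mul _ _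

namespace ProbabilityTheory.IndepFun

section

variable {ι : Type*} [Fintype ι] {U V : Ω → EuclideanSpace ℝ ι}

lemma integrable_mul_mul_mul (hU : MemLp U 2 μ) (hV : MemLp V 2 μ) (hUV : IndepFun U V μ)
    (i j k l : ι) : Integrable (fun ω => U ω i * U ω j * (V ω k * V ω l)) μ := by
  have hind : IndepFun (fun ω => U ω i * U ω j) (fun ω => V ω k * V ω l) μ :=
    hUV.comp (φ := fun x : EuclideanSpace ℝ ι => x i * x j)
      (ψ := fun x : EuclideanSpace ℝ ι => x k * x l) (by fun_prop) (by fun_prop)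
  exact hind.integrable_mul ((hU.eval_piLp i).integrable_mul (hU.eval_piLp j))
    ((hV.eval_piLp k).integrable_mul (hV.eval_piLp l))

lemma memLp_inner (hU : MemLp U 2 μ) (hV : MemLp V 2 μ) (hUV : IndepFun U V μ) :
    MemLp (fun ω => ⟪U ω, V ω⟫) 2 μ := by
  refine (memLp_two_iff_integrable_sq (hU.1.inner hV.1)).2 ?_
  simp only [real_inner_sq_eq_sum_sum]
  exact integrable_finsetSum _ fun i _ => integrable_finsetSum _ fun j _ =>
    hUV.integrable_mul_mul_mul hU hV i j i j

lemma integral_inner_sq (hU : MemLp U 2 μ) (hV : MemLp V 2 μ) (hUV : IndepFun U V μ) :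
    ∫ ω, ⟪U ω, V ω⟫ ^ 2 ∂μ
      = ∑ i, ∑ j, (∫ ω, U ω i * U ω j ∂μ) * ∫ ω, V ω i * V ω j ∂μ := by
  simp only [real_inner_sq_eq_sum_sum]
  rw [integral_sum_sum fun i j => hUV.integrable_mul_mul_mul hU hV i j i j]
  refine Finset.sum_congr rfl fun i _ => Finset.sum_congr rfl fun j _ => ?_
  exact (hUV.comp (φ := fun x : EuclideanSpace ℝ ι => x i * x j)
    (ψ := fun x : EuclideanSpace ℝ ι => x i * x j) (by fun_prop)
    (by fun_prop)).integral_fun_mul_eq_mul_integral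
      ((hU.eval_piLp i).aestronglyMeasurable.mul (hU.eval_piLp j).aestronglyMeasurable)
      ((hV.eval_piLp i).aestronglyMeasurable.mul (hV.eval_piLp j).aestronglyMeasurable)

end

lemma integral_inner_sub_integral_sq_le [IsFiniteMeasure μ] {d : ℕ}
    {U V : Ω → EuclideanSpace ℝ (Fin d)} (hU : MemLp U 2 μ) (hV : MemLp V 2 μ)
    (hUV : IndepFun U V μ) :
    ∫ ω, ⟪U ω, V ω - ∫ ω', V ω' ∂μ⟫ ^ 2 ∂μ ≤ opNorm (covM μ V) * ∫ ω, ‖U ω‖ ^ 2 ∂μ := by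
  have hV' : MemLp (fun ω => V ω - ∫ ω', V ω' ∂μ) 2 μ := hV.sub (memLp_const _)
  have hUV' : IndepFun U (fun ω => V ω - ∫ ω', V ω' ∂μ) μ :=
    hUV.comp (φ := id) (ψ := fun x => x - ∫ ω', V ω' ∂μ) measurable_id (by fun_prop)
  rw [hUV'.integral_inner_sq hU hV']
  simp only [← covM_apply (hV.integrable one_le_two)]
  exact sum_sum_integral_mul_le_opNorm_mul hU _

end ProbabilityTheory.IndepFun

end

/-- For independent random vectors `z₁, z₂` in `ℝ^d` with finite second moments,
`Var(z₁ · z₂) ≤ 3·Tr(Cov(z₁))·‖Cov(z₂)‖ + 3·‖E[z₁]‖²·‖Cov(z₂)‖ + 3·‖E[z₂]‖²·‖Cov(z₁)‖`. -/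
theorem var_dotProduct_le {Ω : Type*} [MeasurableSpace Ω] (μ : Measure Ω)
    [IsProbabilityMeasure μ] {d : ℕ} (z₁ z₂ : Ω → EuclideanSpace ℝ (Fin d))
    (h1 : MemLp z₁ 2 μ) (h2 : MemLp z₂ 2 μ) (hind : IndepFun z₁ z₂ μ) :
    variance (fun ω => ⟪z₁ ω, z₂ ω⟫) μ
      ≤ 3 * (covM μ z₁).trace * opNorm (covM μ z₂)
        + 3 * ‖∫ ω, z₁ ω ∂μ‖ ^ 2 * opNorm (covM μ z₂)
        + 3 * ‖∫ ω, z₂ ω ∂μ‖ ^ 2 * opNorm (covM μ z₁) := by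
  set m₁ := ∫ ω, z₁ ω ∂μ
  set m₂ := ∫ ω, z₂ ω ∂μ
  have hc₁ : MemLp (fun ω => z₁ ω - m₁) 2 μ := h1.sub (memLp_const m₁)
  have hA : MemLp (fun ω => ⟪m₁, z₂ ω⟫) 2 μ := h2.const_inner m₁
  have hB : MemLp (fun ω => ⟪m₂, z₁ ω⟫) 2 μ := h1.const_inner m₂
  have hind₁ : IndepFun (fun ω => z₁ ω - m₁) z₂ μ :=
    hind.comp (φ := fun x => x - m₁) (ψ := id) (by fun_prop) measurable_id
  have hind₁₂ : IndepFun (fun ω => z₁ ω - m₁) (fun ω => z₂ ω - m₂) μ :=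
    hind₁.comp (φ := id) (ψ := fun x => x - m₂) measurable_id (by fun_prop)
  have hC : MemLp (fun ω => ⟪z₁ ω - m₁, z₂ ω - m₂⟫) 2 μ :=
    hind₁₂.memLp_inner hc₁ (h2.sub (memLp_const m₂))
  have hvar_C : Var[fun ω => ⟪z₁ ω - m₁, z₂ ω - m₂⟫; μ]
      ≤ opNorm (covM μ z₂) * (covM μ z₁).trace := by
    rw [trace_covM h1]
    exact (variance_le_expectation_sq hC.1).trans
      (hind₁.integral_inner_sub_integral_sq_le hc₁ h2)
  have hdecomp : (fun ω => ⟪z₁ ω, z₂ ω⟫) = fun ω =>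
      ((fun ω => ⟪m₁, z₂ ω⟫) + (fun ω => ⟪m₂, z₁ ω⟫) + fun ω => ⟪z₁ ω - m₁, z₂ ω - m₂⟫) ω
        - ⟪m₁, m₂⟫ := by
    ext ω
    simp only [Pi.add_apply, inner_sub_left, inner_sub_right, real_inner_comm]
    ring
  rw [hdecomp, variance_sub_const (hA.add hB |>.add hC).1]
  linarith [variance_add_add_le hA hB hC, variance_inner_le h2 m₁, variance_inner_le h1 m₂]
end

section
/- Let u₁, ..., u_ℓ ∈ ℝ^d be mutually orthogonal unit vectors and U = [u₁, ..., u_ℓ] ∈ ℝ^{d×ℓ}. For any vectors z₀, ..., z_{k-1} ∈ ℝ^d, nonnegative reals p₀, ..., p_{k-1} with p₀ > 0, and reals a₁, ..., a_ℓ, we have ‖(I - UUᵀ) z₀‖² ≤ ‖Σ_{i=0}^{k-1} pᵢ zᵢ zᵢᵀ − Σ_{j=1}^{ℓ} aⱼ uⱼ uⱼᵀ‖ / p₀. -/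
/-! The residual `r = (I - UUᵀ) z₀` is orthogonal to every `uⱼ`, so the quadratic form of
`M = Σ pᵢ zᵢzᵢᵀ - Σ aⱼ uⱼuⱼᵀ` at `r` only sees the first sum:
`⟪r, M r⟫ = Σ pᵢ ⟪zᵢ, r⟫² ≥ p₀ ⟪z₀, r⟫² = p₀ ‖r‖⁴`, while `⟪r, M r⟫ ≤ ‖M‖ ‖r‖²`. -/

open Matrix

def fromE {d : ℕ} (x : EuclideanSpace ℝ (Fin d)) : Fin d → ℝ :=
  (WithLp.equiv 2 (Fin d → ℝ)) x

noncomputable def toE {d : ℕ} (x : Fin d → ℝ) : EuclideanSpace ℝ (Fin d) :=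
  (WithLp.equiv 2 (Fin d → ℝ)).symm x

open InnerProductSpace
open scoped RealInnerProductSpace

lemma Matrix.toEuclideanCLM_vecMulVec {n : Type*} [Fintype n] [DecidableEq n]
    (x y : EuclideanSpace ℝ n) :
    toEuclideanCLM (𝕜 := ℝ) (vecMulVec x.ofLp y.ofLp) = rankOne ℝ x y := by
  ext w i
  simp [vecMulVec_mulVec, PiLp.inner_apply, dotProduct, mul_comm]

section

variable {E : Type*} [NormedAddCommGroup E] [InnerProductSpace ℝ E]

lemma real_inner_apply_self_le_opNorm_mul_sq (T : E →L[ℝ] E) (x : E) :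
    ⟪x, T x⟫ ≤ ‖T‖ * ‖x‖ ^ 2 :=
  calc ⟪x, T x⟫ ≤ ‖x‖ * ‖T x‖ := real_inner_le_norm _ _
    _ ≤ ‖x‖ * (‖T‖ * ‖x‖) := by gcongr; exact T.le_opNorm x
    _ = ‖T‖ * ‖x‖ ^ 2 := by ring

variable {κ : Type*} [Fintype κ] {u : κ → E}

lemma Orthonormal.inner_sub_sum_inner_smul_eq_zero (hu : Orthonormal ℝ u) (x : E) (i : κ) :
    ⟪u i, x - ∑ j, ⟪u j, x⟫ • u j⟫ = 0 := by
  rw [inner_sub_right, hu.inner_right_fintype, sub_self]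

lemma Orthonormal.inner_sub_sum_inner_smul_self (hu : Orthonormal ℝ u) (x : E) :
    ⟪x, x - ∑ j, ⟪u j, x⟫ • u j⟫ = ‖x - ∑ j, ⟪u j, x⟫ • u j‖ ^ 2 := by
  set r := x - ∑ j, ⟪u j, x⟫ • u j
  have hproj : ⟪∑ j, ⟪u j, x⟫ • u j, r⟫ = 0 := by
    simp [sum_inner, real_inner_smul_left, r, hu.inner_sub_sum_inner_smul_eq_zero]
  calc ⟪x, r⟫ = ⟪r + ∑ j, ⟪u j, x⟫ • u j, r⟫ := by rw [sub_add_cancel]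
    _ = ‖r‖ ^ 2 := by rw [inner_add_left, hproj, add_zero, real_inner_self_eq_norm_sq]

lemma inner_apply_self_eq_sum_sq_of_orthogonal {ι : Type*} [Fintype ι] (z : ι → E) (p : ι → ℝ)
    (a : κ → ℝ) {r : E} (hr : ∀ j, ⟪u j, r⟫ = 0) :
    ⟪r, (∑ i, p i • rankOne ℝ (z i) (z i) - ∑ j, a j • rankOne ℝ (u j) (u j)) r⟫
      = ∑ i, p i * ⟪z i, r⟫ ^ 2 := by
  simp [inner_sum, real_inner_smul_right, hr, real_inner_comm r, sq]

theorem Orthonormal.norm_sq_sub_sum_inner_smul_le {ι : Type*} [Fintype ι] (hu : Orthonormal ℝ u)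
    (z : ι → E) {p : ι → ℝ} (hp : ∀ i, 0 ≤ p i) {i₀ : ι} (hpi₀ : 0 < p i₀) (a : κ → ℝ) :
    ‖z i₀ - ∑ j, ⟪u j, z i₀⟫ • u j‖ ^ 2
      ≤ ‖∑ i, p i • rankOne ℝ (z i) (z i) - ∑ j, a j • rankOne ℝ (u j) (u j)‖ / p i₀ := by
  set T := ∑ i, p i • rankOne ℝ (z i) (z i) - ∑ j, a j • rankOne ℝ (u j) (u j)
  set r := z i₀ - ∑ j, ⟪u j, z i₀⟫ • u j
  have hlower : p i₀ * (‖r‖ ^ 2) ^ 2 ≤ ⟪r, T r⟫ := by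
    rw [inner_apply_self_eq_sum_sq_of_orthogonal z p a (hu.inner_sub_sum_inner_smul_eq_zero _),
      ← hu.inner_sub_sum_inner_smul_self]
    exact Finset.single_le_sum (f := fun i ↦ p i * ⟪z i, r⟫ ^ 2)
      (fun i _ ↦ mul_nonneg (hp i) (sq_nonneg _)) (Finset.mem_univ i₀)
  have hupper := real_inner_apply_self_le_opNorm_mul_sq T r
  rw [le_div_iff₀ hpi₀]
  rcases (sq_nonneg ‖r‖).eq_or_lt with hr | hr
  · rw [← hr, zero_mul]
    exact norm_nonneg T
  · exact le_of_mul_le_mul_right (by linarith) hr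

end

/-- For mutually orthogonal unit vectors `u₁, ..., u_ℓ` with `U = [u₁, ..., u_ℓ]`,
any vectors `z₀, ..., z_{k-1}`, nonnegative reals `p₀, ..., p_{k-1}` with `p₀ > 0`, and reals
`a₁, ..., a_ℓ`:
`‖(I - UUᵀ) z₀‖² ≤ ‖Σᵢ pᵢ zᵢ zᵢᵀ − Σⱼ aⱼ uⱼ uⱼᵀ‖ / p₀`. -/
theorem norm_sq_residual_le {d ℓ k : ℕ} [NeZero k]
    (u : Fin ℓ → EuclideanSpace ℝ (Fin d)) (hu : Orthonormal ℝ u)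
    (z : Fin k → EuclideanSpace ℝ (Fin d))
    (p : Fin k → ℝ) (hp : ∀ i, 0 ≤ p i) (hp0 : 0 < p 0)
    (a : Fin ℓ → ℝ) :
    ‖toE ((1 - ∑ j, vecMulVec (fromE (u j)) (fromE (u j))).mulVec (fromE (z 0)))‖ ^ 2
      ≤ opNorm (∑ i, p i • vecMulVec (fromE (z i)) (fromE (z i))
          - ∑ j, a j • vecMulVec (fromE (u j)) (fromE (u j))) / p 0 := by
  have hres : toE ((1 - ∑ j, vecMulVec (fromE (u j)) (fromE (u j))) *ᵥ fromE (z 0))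
      = z 0 - ∑ j, ⟪u j, z 0⟫ • u j := by
    change toEuclideanCLM (𝕜 := ℝ) _ (z 0) = _
    simp [fromE, toEuclideanCLM_vecMulVec]
  have hop : toEuclideanCLM (𝕜 := ℝ) (∑ i, p i • vecMulVec (fromE (z i)) (fromE (z i))
      - ∑ j, a j • vecMulVec (fromE (u j)) (fromE (u j)))
      = ∑ i, p i • rankOne ℝ (z i) (z i) - ∑ j, a j • rankOne ℝ (u j) (u j) := by
    simp [fromE, toEuclideanCLM_vecMulVec]
  rw [hres, opNorm, hop]
  exact hu.norm_sq_sub_sum_inner_smul_le z hp hp0 a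
end

section
/- Let Σ be a symmetric positive semidefinite d×d matrix with smallest eigenvalue at least 1 and ‖Σ‖ ≤ C₁ for some C₁ ≥ 1. Fix w₀ ∈ ℝ^d, σ > 0, ε ∈ (0,1]. Define a sequence by ŵ^{(1)} = 0 and ŵ^{(r+1)} = ŵ^{(r)} − Δ^{(r)}/C₁, where each Δ^{(r)} ∈ ℝ^d satisfies ‖Δ^{(r)} − Σ(ŵ^{(r)} − w₀)‖ ≤ ½‖ŵ^{(r)} − w₀‖ + εσ/4. Then for every r, ‖ŵ^{(r+1)} − w₀‖ ≤ (1 − 1/(2C₁))^r ‖w₀‖ + εσ/2; in particular, if R ≥ 2C₁ ln(2‖w₀‖/(εσ)) then ‖ŵ^{(R+1)} − w₀‖ ≤ εσ. -/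
/-!
The error `e_r = ŵ^{(r)} − w₀` satisfies `e_{r+1} = (I − Σ/C₁) e_r − (Δ^{(r)} − Σ e_r)/C₁`.
Since `Σ` is symmetric with spectrum in `[1, C₁]`, the operator norm of `I − Σ/C₁` is its largest
Rayleigh quotient in absolute value, at most `1 − 1/C₁`; adding the gradient error gives
`‖e_{r+1}‖ ≤ (1 − 1/(2C₁))‖e_r‖ + εσ/(4C₁)`, and unrolling this affine recursion gives the
geometric bound, whose bias term is `(εσ/(4C₁)) / (1/(2C₁)) = εσ/2`. The round count follows from
`(1 − 1/N)^R ≤ exp(−R/N)`.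
-/

open Matrix
open scoped RealInnerProductSpace

namespace ContinuousLinearMap

theorem norm_le_of_abs_re_inner_self_le {𝕜 E : Type*} [RCLike 𝕜] [NormedAddCommGroup E]
    [InnerProductSpace 𝕜 E] {T : E →L[𝕜] E} (hT : T.IsSymmetric) {c : ℝ} (hc : 0 ≤ c)
    (h : ∀ x, |RCLike.re (inner 𝕜 (T x) x)| ≤ c * ‖x‖ ^ 2) : ‖T‖ ≤ c := by
  rw [T.norm_eq_iSup_rayleighQuotient hT]
  refine ciSup_le fun x ↦ ?_
  rw [rayleighQuotient, reApplyInnerSelf_apply, abs_div, abs_sq]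
  rcases eq_or_ne x 0 with rfl | hx
  · simpa using hc
  · exact div_le_of_le_mul₀ (by positivity) hc (h x)

variable {E : Type*} [NormedAddCommGroup E] [InnerProductSpace ℝ E]

theorem norm_one_sub_inv_smul_le {T : E →L[ℝ] E} (hT : T.IsSymmetric) {m C : ℝ}
    (hmC : m ≤ C) (hC : 0 < C) (hlow : ∀ x, m * ‖x‖ ^ 2 ≤ ⟪T x, x⟫) (hup : ‖T‖ ≤ C) :
    ‖1 - C⁻¹ • T‖ ≤ 1 - m / C := by
  have hsymm : (1 - C⁻¹ • T).IsSymmetric := fun x y ↦ by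
    simp only [coe_coe, _root_.sub_apply, one_apply_eq_self, _root_.smul_apply, inner_sub_left,
      inner_sub_right, real_inner_smul_left, real_inner_smul_right, hT.apply_clm x y]
  have hc : 0 ≤ 1 - m / C := by rw [sub_nonneg, div_le_one hC]; exact hmC
  refine norm_le_of_abs_re_inner_self_le hsymm hc fun x ↦ ?_
  have hTx : ⟪T x, x⟫ ≤ C * ‖x‖ ^ 2 := calc
    ⟪T x, x⟫ ≤ ‖T x‖ * ‖x‖ := real_inner_le_norm _ _
    _ ≤ ‖T‖ * ‖x‖ * ‖x‖ := by gcongr; exact T.le_opNorm x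
    _ ≤ C * ‖x‖ ^ 2 := by rw [mul_assoc, ← sq]; gcongr
  have hre : RCLike.re ⟪(1 - C⁻¹ • T) x, x⟫ = ‖x‖ ^ 2 - C⁻¹ * ⟪T x, x⟫ := by
    simp [inner_sub_left, real_inner_smul_left]
  have hq_le : C⁻¹ * ⟪T x, x⟫ ≤ ‖x‖ ^ 2 := by
    rw [inv_mul_le_iff₀ hC]; exact hTx
  have hq_ge : m / C * ‖x‖ ^ 2 ≤ C⁻¹ * ⟪T x, x⟫ := by
    rw [div_mul_eq_mul_div, div_eq_inv_mul]; gcongr; exact hlow x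
  rw [hre, abs_le]
  constructor <;> nlinarith [sq_nonneg ‖x‖]

theorem norm_sub_inv_smul_sub_le {E : Type*} [NormedAddCommGroup E] [NormedSpace ℝ E]
    {T : E →L[ℝ] E} {C κ η δ : ℝ} (hC : 0 < C) (hT : ‖1 - C⁻¹ • T‖ ≤ κ) {x x₀ g : E}
    (hg : ‖g - T (x - x₀)‖ ≤ η * ‖x - x₀‖ + δ) :
    ‖x - C⁻¹ • g - x₀‖ ≤ (κ + η / C) * ‖x - x₀‖ + δ / C := by
  have hsplit : x - C⁻¹ • g - x₀ = (1 - C⁻¹ • T) (x - x₀) - C⁻¹ • (g - T (x - x₀)) := by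
    simp only [_root_.sub_apply, one_apply_eq_self, _root_.smul_apply, smul_sub]
    abel
  calc ‖x - C⁻¹ • g - x₀‖
      ≤ ‖(1 - C⁻¹ • T) (x - x₀)‖ + ‖C⁻¹ • (g - T (x - x₀))‖ := hsplit ▸ norm_sub_le _ _
    _ ≤ ‖1 - C⁻¹ • T‖ * ‖x - x₀‖ + C⁻¹ * ‖g - T (x - x₀)‖ := by
        rw [norm_smul, Real.norm_of_nonneg (inv_nonneg.2 hC.le)]
        gcongr
        exact le_opNorm _ _
    _ ≤ κ * ‖x - x₀‖ + C⁻¹ * (η * ‖x - x₀‖ + δ) := by gcongr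
    _ = (κ + η / C) * ‖x - x₀‖ + δ / C := by ring

end ContinuousLinearMap

theorem le_pow_mul_add_div_one_sub_of_le_mul_add {e : ℕ → ℝ} {ρ b : ℝ} (hρ0 : 0 ≤ ρ)
    (hρ1 : ρ < 1) (hb : 0 ≤ b) (h : ∀ n, e (n + 1) ≤ ρ * e n + b) (n : ℕ) :
    e n ≤ ρ ^ n * e 0 + b / (1 - ρ) := by
  induction n with
  | zero => simpa using div_nonneg hb (sub_nonneg.2 hρ1.le)
  | succ n ih =>
    calc e (n + 1) ≤ ρ * (ρ ^ n * e 0 + b / (1 - ρ)) + b := (h n).trans (by gcongr)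
      _ = ρ ^ (n + 1) * e 0 + b / (1 - ρ) := by
        field_simp [(sub_pos.2 hρ1).ne']
        ring

theorem one_sub_inv_pow_mul_le_of_mul_log_le {N K t : ℝ} {n : ℕ} (hN : 1 ≤ N) (hK : 0 ≤ K)
    (ht : 0 < t) (hn : N * Real.log (K / t) ≤ n) : (1 - N⁻¹) ^ n * K ≤ t := by
  rcases hK.eq_or_lt with rfl | hK
  · simpa using ht.le
  have hpow : (1 - N⁻¹) ^ n ≤ t / K := calc
    (1 - N⁻¹) ^ n ≤ Real.exp (-N⁻¹) ^ n := by
      gcongr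
      · rw [sub_nonneg]; exact inv_le_one_of_one_le₀ hN
      · exact Real.one_sub_le_exp_neg _
    _ = Real.exp (-(n / N)) := by rw [← Real.exp_nat_mul]; ring_nf
    _ ≤ Real.exp (-Real.log (K / t)) := by
      gcongr
      rwa [le_div_iff₀ (by linarith), mul_comm]
    _ = t / K := by rw [Real.exp_neg, Real.exp_log (by positivity), inv_div]
  calc (1 - N⁻¹) ^ n * K ≤ t / K * K := by gcongr
    _ = t := div_mul_cancel₀ t hK.ne'

theorem gradient_descent_rounds_general {d : ℕ} (C₁ σ ε : ℝ)
    (hC₁ : 1 ≤ C₁) (hσ : 0 < σ) (hε : 0 < ε)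
    (A : Matrix (Fin d) (Fin d) ℝ) (hSym : A.IsHermitian)
    (hlow : ∀ v : EuclideanSpace ℝ (Fin d), ‖v‖ ^ 2 ≤ ⟪v, toE (A.mulVec (fromE v))⟫)
    (hup : opNorm A ≤ C₁)
    (w₀ : EuclideanSpace ℝ (Fin d)) (w Δ : ℕ → EuclideanSpace ℝ (Fin d))
    (hw1 : w 1 = 0)
    (hrec : ∀ r, 1 ≤ r → w (r + 1) = w r - C₁⁻¹ • Δ r)
    (hΔ : ∀ r, 1 ≤ r → ‖Δ r - toE (A.mulVec (fromE (w r - w₀)))‖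
      ≤ (1 / 2) * ‖w r - w₀‖ + ε * σ / 4) :
    (∀ r : ℕ, ‖w (r + 1) - w₀‖ ≤ (1 - 1 / (2 * C₁)) ^ r * ‖w₀‖ + ε * σ / 2) ∧
    (∀ R : ℕ, 2 * C₁ * Real.log (2 * ‖w₀‖ / (ε * σ)) ≤ R →
      ‖w (R + 1) - w₀‖ ≤ ε * σ) := by
  have hC : 0 < C₁ := by linarith
  set T := Matrix.toEuclideanCLM (𝕜 := ℝ) A
  have hT : T.IsSymmetric := Matrix.isSymmetric_toEuclideanLin_iff.mpr hSym
  have hcontr : ‖1 - C₁⁻¹ • T‖ ≤ 1 - 1 / C₁ :=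
    T.norm_one_sub_inv_smul_le hT hC₁ hC
      (fun v ↦ by rw [one_mul, real_inner_comm]; exact hlow v) hup
  have hstep (r : ℕ) : ‖w (r + 1 + 1) - w₀‖
      ≤ (1 - 1 / (2 * C₁)) * ‖w (r + 1) - w₀‖ + ε * σ / 4 / C₁ := by
    rw [hrec (r + 1) (by omega)]
    convert ContinuousLinearMap.norm_sub_inv_smul_sub_le hC hcontr (hΔ (r + 1) (by omega))
      using 2
    field_simp; ring
  have hbias : ε * σ / 4 / C₁ / (1 - (1 - 1 / (2 * C₁))) = ε * σ / 2 := by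
    field_simp
    ring
  have hrate (r : ℕ) : ‖w (r + 1) - w₀‖ ≤ (1 - 1 / (2 * C₁)) ^ r * ‖w₀‖ + ε * σ / 2 := by
    have h := le_pow_mul_add_div_one_sub_of_le_mul_add (e := fun r ↦ ‖w (r + 1) - w₀‖)
      (by rw [sub_nonneg, div_le_one (by positivity)]; linarith) (by simp [hC])
      (by positivity) hstep r
    rwa [hbias, zero_add, hw1, zero_sub, norm_neg] at h
  refine ⟨hrate, fun R hR ↦ ?_⟩
  have hdecay : (1 - 1 / (2 * C₁)) ^ R * ‖w₀‖ ≤ ε * σ / 2 := by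
    rw [one_div]
    refine one_sub_inv_pow_mul_le_of_mul_log_le (by linarith) (norm_nonneg _) (by positivity) ?_
    rwa [div_div_eq_mul_div, mul_comm ‖w₀‖]
  linarith [hrate R]

/-- Inexact gradient descent. `A` is symmetric PSD with eigenvalues in `[1, C₁]`,
`ŵ^{(1)} = 0`, `ŵ^{(r+1)} = ŵ^{(r)} − Δ^{(r)}/C₁`, and each `Δ^{(r)}` satisfies
`‖Δ^{(r)} − A(ŵ^{(r)} − w₀)‖ ≤ ½‖ŵ^{(r)} − w₀‖ + εσ/4`. Then for every `r`,
`‖ŵ^{(r+1)} − w₀‖ ≤ (1 − 1/(2C₁))^r ‖w₀‖ + εσ/2`; in particular, if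
`R ≥ 2C₁ ln(2‖w₀‖/(εσ))` then `‖ŵ^{(R+1)} − w₀‖ ≤ εσ`. -/
theorem gradient_descent_rounds {d : ℕ} (C₁ σ ε : ℝ)
    (hC₁ : 1 ≤ C₁) (hσ : 0 < σ) (hε : 0 < ε) (hε1 : ε ≤ 1)
    (A : Matrix (Fin d) (Fin d) ℝ) (hSym : A.IsHermitian)
    (hlow : ∀ v : EuclideanSpace ℝ (Fin d), ‖v‖ ^ 2 ≤ ⟪v, toE (A.mulVec (fromE v))⟫)
    (hup : opNorm A ≤ C₁)
    (w₀ : EuclideanSpace ℝ (Fin d)) (w Δ : ℕ → EuclideanSpace ℝ (Fin d))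
    (hw1 : w 1 = 0)
    (hrec : ∀ r, 1 ≤ r → w (r + 1) = w r - C₁⁻¹ • Δ r)
    (hΔ : ∀ r, 1 ≤ r → ‖Δ r - toE (A.mulVec (fromE (w r - w₀)))‖
      ≤ (1 / 2) * ‖w r - w₀‖ + ε * σ / 4) :
    (∀ r : ℕ, ‖w (r + 1) - w₀‖ ≤ (1 - 1 / (2 * C₁)) ^ r * ‖w₀‖ + ε * σ / 2) ∧
    (∀ R : ℕ, 2 * C₁ * Real.log (2 * ‖w₀‖ / (ε * σ)) ≤ R →
      ‖w (R + 1) - w₀‖ ≤ ε * σ) :=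
  gradient_descent_rounds_general C₁ σ ε hC₁ hσ hε A hSym hlow hup w₀ w Δ hw1 hrec hΔ
end

section
/- Median-of-means selection: let μ ∈ ℝ^d, θ > 0, and Δ₁, ..., Δ_T ∈ ℝ^d. Define D = {i : ‖Δᵢ − μ‖ ≤ θ}, ξᵢ = median{‖Δᵢ − Δⱼ‖ : j ∈ [T]}, and i* = argmin_i ξᵢ. If |D| > T/2, then ‖Δ_{i*} − μ‖ ≤ 3θ. -/
/-- Two subsets of a fintype whose cards sum to more than the ambient card intersect. -/
lemma inter_nonempty_of_card {α : Type*} [Fintype α] [DecidableEq α] (A B : Finset α)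
    (h : Fintype.card α < A.card + B.card) : (A ∩ B).Nonempty := by
  rw [Finset.nonempty_iff_ne_empty]
  intro hAB
  have := Finset.card_union_of_disjoint (Finset.disjoint_iff_inter_eq_empty.mpr hAB)
  have hle : (A ∪ B).card ≤ Fintype.card α := Finset.card_le_univ _
  omega

/-- Median-of-means selection: let `μ ∈ ℝ^d`, `θ > 0` and `Δ₁, ..., Δ_T ∈ ℝ^d`.
Let `ξᵢ` be a median of `{‖Δᵢ − Δⱼ‖ : j ∈ [T]}` (any value such that at least half of the
`j`'s satisfy `‖Δᵢ − Δⱼ‖ ≤ ξᵢ` and at least half satisfy `‖Δᵢ − Δⱼ‖ ≥ ξᵢ`), and let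
`i*` minimize `ξ`. If `D = {i : ‖Δᵢ − μ‖ ≤ θ}` has `|D| > T/2`, then `‖Δ_{i*} − μ‖ ≤ 3θ`. -/
theorem median_of_means_selection {d T : ℕ} (m : EuclideanSpace ℝ (Fin d)) (θ : ℝ)
    (hθ : 0 < θ) (Δ : Fin T → EuclideanSpace ℝ (Fin d)) (ξ : Fin T → ℝ)
    (hmed_le : ∀ i, T ≤ 2 * (Finset.univ.filter fun j => ‖Δ i - Δ j‖ ≤ ξ i).card)
    (hmed_ge : ∀ i, T ≤ 2 * (Finset.univ.filter fun j => ξ i ≤ ‖Δ i - Δ j‖).card)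
    (istar : Fin T) (hstar : ∀ i, ξ istar ≤ ξ i)
    (hD : T < 2 * (Finset.univ.filter fun i => ‖Δ i - m‖ ≤ θ).card) :
    ‖Δ istar - m‖ ≤ 3 * θ := by
  set D : Finset (Fin T) := Finset.univ.filter fun i => ‖Δ i - m‖ ≤ θ with hDdef
  have hT : Fintype.card (Fin T) = T := Fintype.card_fin T
  -- Step 1: for i ∈ D, ξ i ≤ 2θ
  have hxi : ∀ i ∈ D, ξ i ≤ 2 * θ := by
    intro i hi
    have hiD : ‖Δ i - m‖ ≤ θ := by
      simpa [hDdef] using hi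
    -- D and the set {j : ξ i ≤ ‖Δ i - Δ j‖} intersect
    have hcard : Fintype.card (Fin T) <
        D.card + (Finset.univ.filter fun j => ξ i ≤ ‖Δ i - Δ j‖).card := by
      have := hmed_ge i
      omega
    obtain ⟨j, hj⟩ := inter_nonempty_of_card _ _ hcard
    rw [Finset.mem_inter] at hj
    have hjD : ‖Δ j - m‖ ≤ θ := by simpa [hDdef] using hj.1
    have hjx : ξ i ≤ ‖Δ i - Δ j‖ := by simpa using hj.2
    have : ‖Δ i - Δ j‖ ≤ 2 * θ := by
      calc ‖Δ i - Δ j‖ ≤ ‖Δ i - m‖ + ‖m - Δ j‖ := norm_sub_le_norm_sub_add_norm_sub _ _ _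
        _ ≤ θ + θ := by
            have : ‖m - Δ j‖ = ‖Δ j - m‖ := norm_sub_rev _ _
            linarith
        _ = 2 * θ := by ring
    linarith
  -- D is nonempty
  have hDne : D.Nonempty := by
    rw [Finset.nonempty_iff_ne_empty]; intro h
    rw [h] at hD; simp at hD
  obtain ⟨i0, hi0⟩ := hDne
  have hxistar : ξ istar ≤ 2 * θ := le_trans (hstar i0) (hxi i0 hi0)
  -- Step 2: the set {j : ‖Δ istar - Δ j‖ ≤ ξ istar} intersects D
  have hcard : Fintype.card (Fin T) <
      D.card + (Finset.univ.filter fun j => ‖Δ istar - Δ j‖ ≤ ξ istar).card := by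
    have := hmed_le istar
    omega
  obtain ⟨j, hj⟩ := inter_nonempty_of_card _ _ hcard
  rw [Finset.mem_inter] at hj
  have hjD : ‖Δ j - m‖ ≤ θ := by simpa [hDdef] using hj.1
  have hjx : ‖Δ istar - Δ j‖ ≤ ξ istar := by simpa using hj.2
  calc ‖Δ istar - m‖ ≤ ‖Δ istar - Δ j‖ + ‖Δ j - m‖ := norm_sub_le_norm_sub_add_norm_sub _ _ _
    _ ≤ 2 * θ + θ := by linarith
    _ = 3 * θ := by ring
end
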